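/- arXiv:1711.03309 — 4 statements merged into one kernel-verified Lean document; each statement's English description precedes it below -/
import Mathlib

section
/- Let G be a group with a finite symmetric generating set S admitting an automatic structure (S, L). Then G satisfies the quadratic radial isoperimetric inequality: there exist a finite set R of words over S representing the identity e, whose normal closure in F_S is the kernel of μ : F_S → G, and a constant C > 0, such that every word w = s₁⋯sₙ over S representing e satisfies Area_R(w) ≤ C · Σ_{i=1}^n (d_S(w̄(i), e) + 1). -/
/-!
Fix for each `g` a shortest accepted word `rep g`. If `rep (g s)` were much longer than `rep g`,
then past the length of `rep g` two of its prefixes would reach the same automaton state and stay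
at the same displacement from `g` (a point of the finite `k`-ball, by fellow travelling); cutting
out the loop between them gives a shorter accepted word for `g s`. Hence `|rep g|` grows linearly
in `|g|`. A null word `w = s₁ ⋯ sₙ` is, up to conjugation, the product of the ladders
`rep (w̄(j-1)) sⱼ rep (w̄(j))⁻¹`, and fellow travelling cuts each ladder into
`|rep (w̄(j-1))| + |rep (w̄(j))| + 1` conjugates of null words of length at most `2k + 2`.
Summing over `j` gives the quadratic radial bound, and the same decomposition shows that these
short null words present `G`.
-/

open scoped Pointwise

/-- The product in `G` of a word over the subset `S ⊆ G`. -/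
def wordProd {G : Type*} [Group G] (S : Set G) (w : List S) : G :=
  (w.map (fun s => (s : G))).prod

/-- The word metric `d_S(a,b)`: the least `n` such that `b⁻¹ * a` is a product of
`n` elements of `S`. -/
noncomputable def wordDist {G : Type*} [Group G] (S : Set G) (a b : G) : ℕ :=
  sInf {n | ∃ w : List S, w.length = n ∧ wordProd S w = b⁻¹ * a}

/-- The evaluation homomorphism `μ : F_S → G` from the free group on `S`. -/
noncomputable def muEval {G : Type*} [Group G] (S : Set G) : FreeGroup S →* G :=
  FreeGroup.lift (fun s => (s : G))

/-- A word over `S`, regarded as an element of the free group `F_S`. -/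
def wordToFree {G : Type*} [Group G] (S : Set G) (w : List S) : FreeGroup S :=
  (w.map FreeGroup.of).prod

/-- The combinatorial area of a word `w` over `S` with respect to the relator set
`R ⊆ F_S`: the least `k` such that `w = ∏_{i=1}^k vᵢ rᵢ vᵢ⁻¹` in `F_S` with each
`rᵢ ∈ R` or `rᵢ⁻¹ ∈ R`. -/
noncomputable def area {G : Type*} [Group G] (S : Set G) (R : Set (FreeGroup S))
    (w : List S) : ℕ :=
  sInf {k | ∃ v r : Fin k → FreeGroup S,
    (∀ i, r i ∈ R ∨ (r i)⁻¹ ∈ R) ∧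
    wordToFree S w = (List.ofFn (fun i => v i * r i * (v i)⁻¹)).prod}

open scoped Classical

section Words

variable {G : Type*} [Group G] {S : Set G}

@[simp]
lemma wordProd_nil : wordProd S [] = 1 := rfl

@[simp]
lemma wordProd_append (u v : List S) : wordProd S (u ++ v) = wordProd S u * wordProd S v := by
  simp [wordProd]

@[simp]
lemma wordProd_singleton (s : S) : wordProd S [s] = s := by
  simp [wordProd]

@[simp]
lemma wordToFree_nil : wordToFree S [] = 1 := rfl

@[simp]
lemma wordToFree_append (u v : List S) :
    wordToFree S (u ++ v) = wordToFree S u * wordToFree S v := by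
  simp [wordToFree]

@[simp]
lemma wordToFree_singleton (s : S) : wordToFree S [s] = FreeGroup.of s := by
  simp [wordToFree]

@[simp]
lemma muEval_of (s : S) : muEval S (FreeGroup.of s) = s :=
  FreeGroup.lift_apply_of

@[simp]
lemma muEval_wordToFree (w : List S) : muEval S (wordToFree S w) = wordProd S w := by
  induction w using List.reverseRecOn with
  | nil => simp
  | append_singleton w s ih => simp [ih]

lemma norm_wordToFree_le (w : List S) : (wordToFree S w).norm ≤ w.length := by
  induction w using List.reverseRecOn with
  | nil => simp
  | append_singleton w s ih =>
    simpa using (FreeGroup.norm_mul_le _ _).trans (by simpa using ih)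

lemma wordProd_take_add_one (w : List S) {j : ℕ} (hj : j < w.length) :
    wordProd S (w.take (j + 1)) = wordProd S (w.take j) * w[j] := by
  rw [List.take_add_one, List.getElem?_eq_getElem hj, Option.toList_some, wordProd_append,
    wordProd_singleton]

lemma wordToFree_take_add_one (w : List S) {j : ℕ} (hj : j < w.length) :
    wordToFree S (w.take (j + 1)) = wordToFree S (w.take j) * FreeGroup.of w[j] := by
  rw [List.take_add_one, List.getElem?_eq_getElem hj, Option.toList_some, wordToFree_append,
    wordToFree_singleton]

lemma wordDist_le_length {a b : G} (w : List S) (hw : wordProd S w = b⁻¹ * a) :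
    wordDist S a b ≤ w.length :=
  Nat.sInf_le ⟨w, rfl, hw⟩

lemma wordDist_self (a : G) : wordDist S a a = 0 :=
  Nat.le_zero.mp (wordDist_le_length [] (by simp))

lemma exists_length_eq_wordDist (hS : ∀ g : G, ∃ w : List S, wordProd S w = g) (a b : G) :
    ∃ w : List S, w.length = wordDist S a b ∧ wordProd S w = b⁻¹ * a :=
  Nat.sInf_mem (s := {n | ∃ w : List S, w.length = n ∧ wordProd S w = b⁻¹ * a})
    (let ⟨w, hw⟩ := hS (b⁻¹ * a); ⟨w.length, w, rfl, hw⟩)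

end Words

lemma DFA.take_append_drop_mem_accepts {α σ : Type*} (M : DFA α σ) {v : List α}
    (hv : v ∈ M.accepts) {i j : ℕ} (hij : M.eval (v.take i) = M.eval (v.take j)) :
    v.take i ++ v.drop j ∈ M.accepts := by
  rw [DFA.mem_accepts, DFA.eval, DFA.evalFrom_of_append]
  rwa [← DFA.eval, hij, DFA.eval, ← DFA.evalFrom_of_append, List.take_append_drop]

lemma Finset.sum_range_le_sum_range_succ {M : Type*} [AddCommMonoid M] [PartialOrder M]
    [IsOrderedAddMonoid M] (f : ℕ → M) (hf : ∀ m, f 0 ≤ f m) (n : ℕ) :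
    ∑ j ∈ range n, f j ≤ ∑ j ∈ range n, f (j + 1) := by
  cases n with
  | zero => simp
  | succ n =>
    rw [sum_range_succ', sum_range_succ]
    exact add_le_add_right (hf _) _

section Relators

variable {G : Type*} [Group G] {S : Set G}

def relators (S : Set G) (n : ℕ) : Set (FreeGroup S) :=
  {r | muEval S r = 1 ∧ r.norm ≤ n}

lemma relators_finite (hS : S.Finite) (n : ℕ) : (relators S n).Finite := by
  have := hS.to_subtype
  refine ((List.finite_length_le (S × Bool) n).image FreeGroup.mk).subset fun r hr => ?_
  exact ⟨r.toWord, hr.2, FreeGroup.mk_toWord⟩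

lemma conj_mem_pow_conjugatesOfSet {M : Type*} [Group M] {R : Set M} {n : ℕ} {x : M}
    (hx : x ∈ Group.conjugatesOfSet R ^ n) (c : M) :
    c * x * c⁻¹ ∈ Group.conjugatesOfSet R ^ n := by
  have hc := Set.mem_image_of_mem (MulAut.conj c) hx
  rw [Set.image_pow, MulAut.conj_apply] at hc
  refine Set.pow_subset_pow_left ?_ hc
  rintro _ ⟨y, hy, rfl⟩
  exact Group.conj_mem_conjugatesOfSet hy

lemma area_le_of_mem_pow {R : Set (FreeGroup S)} {w : List S} {n : ℕ}
    (hw : wordToFree S w ∈ Group.conjugatesOfSet R ^ n) : area S R w ≤ n := by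
  obtain ⟨f, hf⟩ := Set.mem_pow.mp hw
  have hconj (i : Fin n) : ∃ r ∈ R, ∃ v, v * r * v⁻¹ = f i := by
    obtain ⟨r, hr, hrf⟩ := Group.mem_conjugatesOfSet_iff.mp (f i).2
    exact ⟨r, hr, isConj_iff.mp hrf⟩
  choose r hr v hv using hconj
  exact Nat.sInf_le ⟨v, r, fun i => Or.inl (hr i), by simp only [hv, hf]⟩

end Relators

section FellowTraveler

variable {G : Type*} [Group G] {S : Set G}

def FellowTravelerProperty (S : Set G) (L : Language S) (k : ℕ) : Prop :=
  ∀ u ∈ L, ∀ v ∈ L, wordDist S (wordProd S u) (wordProd S v) ≤ 1 →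
    ∀ i : ℕ, wordDist S (wordProd S (u.take i)) (wordProd S (v.take i)) ≤ k

lemma FellowTravelerProperty.exists_short_word {L : Language S} {k : ℕ}
    (hft : FellowTravelerProperty S L k) (hS : ∀ g : G, ∃ w : List S, wordProd S w = g)
    {u v : List S} (hu : u ∈ L) (hv : v ∈ L) {s : S} (hμ : wordProd S v = wordProd S u * s)
    (i : ℕ) : ∃ c : List S, c.length ≤ k ∧
      wordProd S c = (wordProd S (u.take i))⁻¹ * wordProd S (v.take i) := by
  have hd : wordDist S (wordProd S v) (wordProd S u) ≤ 1 :=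
    wordDist_le_length [s] (by simp [hμ])
  obtain ⟨c, hc, hcμ⟩ :=
    exists_length_eq_wordDist hS (wordProd S (v.take i)) (wordProd S (u.take i))
  exact ⟨c, hc ▸ hft v hv u hu hd i, hcμ⟩

lemma ladder_mem_pow {k : ℕ} {u v : List S}
    (htravel : ∀ i, ∃ c : List S, c.length ≤ k ∧
      wordProd S c = (wordProd S (u.take i))⁻¹ * wordProd S (v.take i))
    (j : ℕ) {γ : FreeGroup S} (hγ : γ.norm ≤ k)
    (hγμ : muEval S γ = (wordProd S (u.take j))⁻¹ * wordProd S (v.take j)) :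
    wordToFree S (u.take j) * γ * (wordToFree S (v.take j))⁻¹ ∈
      Group.conjugatesOfSet (relators S (2 * k + 2)) ^ (j + 1) := by
  induction j generalizing γ with
  | zero =>
    simp only [List.take_zero, wordProd_nil, inv_one, one_mul, wordToFree_nil, mul_one,
      zero_add, pow_one] at hγμ ⊢
    exact Group.subset_conjugatesOfSet ⟨hγμ, by omega⟩
  | succ j ih =>
    obtain ⟨c, hc, hcμ⟩ := htravel j
    have hP := ih ((norm_wordToFree_le c).trans hc) (by rw [muEval_wordToFree, hcμ])
    obtain ⟨du, hdu, hu⟩ : ∃ d, d.length ≤ 1 ∧ u.take (j + 1) = u.take j ++ d :=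
      ⟨_, by simp, List.take_add⟩
    obtain ⟨dv, hdv, hv⟩ : ∃ d, d.length ≤ 1 ∧ v.take (j + 1) = v.take j ++ d :=
      ⟨_, by simp, List.take_add⟩
    rw [hu, hv, wordProd_append, wordProd_append] at hγμ
    -- the rung joining the `j`-th and `(j+1)`-st ladder steps
    set ρ := (wordToFree S c)⁻¹ * wordToFree S du * γ * (wordToFree S dv)⁻¹ with hρ_def
    have hρ : ρ ∈ relators S (2 * k + 2) := by
      refine ⟨?_, ?_⟩
      · simp only [ρ, map_mul, map_inv, muEval_wordToFree, hcμ, hγμ]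
        group
      · have := (norm_wordToFree_le c).trans hc
        have := (norm_wordToFree_le du).trans hdu
        have := (norm_wordToFree_le dv).trans hdv
        calc ρ.norm ≤ (wordToFree S c)⁻¹.norm + (wordToFree S du).norm + γ.norm +
              (wordToFree S dv)⁻¹.norm := by
              grw [hρ_def, FreeGroup.norm_mul_le, FreeGroup.norm_mul_le, FreeGroup.norm_mul_le]
          _ ≤ 2 * k + 2 := by
              rw [FreeGroup.norm_inv_eq, FreeGroup.norm_inv_eq]
              omega
    have hsplit : wordToFree S (u.take (j + 1)) * γ * (wordToFree S (v.take (j + 1)))⁻¹ =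
        (wordToFree S (u.take j) * wordToFree S c * (wordToFree S (v.take j))⁻¹) *
          (wordToFree S (v.take j) * ρ * (wordToFree S (v.take j))⁻¹) := by
      simp only [ρ, hu, hv, wordToFree_append]
      group
    rw [hsplit, pow_succ]
    exact Set.mul_mem_mul hP
      (Group.conj_mem_conjugatesOfSet (Group.subset_conjugatesOfSet hρ))

lemma wordToFree_mul_of_mul_inv_mem_pow {k : ℕ} (hk : 0 < k) {u v : List S}
    (htravel : ∀ i, ∃ c : List S, c.length ≤ k ∧
      wordProd S c = (wordProd S (u.take i))⁻¹ * wordProd S (v.take i))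
    {s : S} (hμ : wordProd S v = wordProd S u * s) :
    wordToFree S u * FreeGroup.of s * (wordToFree S v)⁻¹ ∈
      Group.conjugatesOfSet (relators S (2 * k + 2)) ^ (u.length + v.length + 1) := by
  have hu : u.take (u.length + v.length) = u := List.take_of_length_le (by omega)
  have hv : v.take (u.length + v.length) = v := List.take_of_length_le (by omega)
  have := ladder_mem_pow htravel (u.length + v.length) (γ := FreeGroup.of s)
    (by rw [FreeGroup.norm_of]; omega) (by rw [hu, hv, hμ, muEval_of]; group)
  rwa [hu, hv] at this

lemma length_lt_add_card_mul_card_of_shortest {Q : Type*} [Fintype Q] {M : DFA S Q} {v : List S}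
    (hv : v ∈ M.accepts)
    (hmin : ∀ v' ∈ M.accepts, wordProd S v' = wordProd S v → v.length ≤ v'.length)
    (g : G) (a : ℕ) (B : Finset G)
    (hB : ∀ i, a ≤ i → g⁻¹ * wordProd S (v.take i) ∈ B) :
    v.length < a + Fintype.card Q * B.card := by
  by_contra! hlong
  have hcard : ((Finset.univ : Finset Q) ×ˢ B).card < (Finset.Icc a v.length).card := by
    rw [Finset.card_product, Finset.card_univ, Nat.card_Icc]
    omega
  obtain ⟨i, hi, j, hj, hne, heq⟩ := Finset.exists_ne_map_eq_of_card_lt_of_maps_to hcard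
    (f := fun i => (M.eval (v.take i), g⁻¹ * wordProd S (v.take i)))
    (fun i hi => by simpa using hB i (Finset.mem_Icc.mp hi).1)
  simp only [Finset.mem_Icc, Prod.mk.injEq, mul_right_inj] at hi hj heq
  wlog hij : i < j generalizing i j
  · exact this j i hne.symm hj hi ⟨heq.1.symm, heq.2.symm⟩ (by omega)
  have hcut := hmin _ (M.take_append_drop_mem_accepts hv heq.1)
    (by rw [wordProd_append, heq.2, ← wordProd_append, List.take_append_drop])
  simp only [List.length_append, List.length_take, List.length_drop] at hcut
  omega

lemma exists_shortest {L : Language S} (hsurj : ∀ g : G, ∃ w ∈ L, wordProd S w = g)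
    (g : G) :
    ∃ u ∈ L, wordProd S u = g ∧ ∀ v ∈ L, wordProd S v = g → u.length ≤ v.length := by
  obtain ⟨u, ⟨hu, hug⟩, hmin⟩ :=
    (measure List.length).wf.has_min {u | u ∈ L ∧ wordProd S u = g}
    (hsurj g)
  exact ⟨u, hu, hug, fun v hv hvg => not_lt.mp (hmin v ⟨hv, hvg⟩)⟩

lemma FellowTravelerProperty.length_lt_of_shortest {L : Language S} {k : ℕ}
    (hft : FellowTravelerProperty S L k) (hS : ∀ g : G, ∃ w : List S, wordProd S w = g)
    {Q : Type*} [Fintype Q] {M : DFA S Q} (hM : M.accepts = L)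
    (B : Finset G) (hB : ∀ c : List S, c.length ≤ k → wordProd S c ∈ B)
    {u v : List S} (hu : u ∈ L) (hv : v ∈ L)
    (hmin : ∀ v' ∈ L, wordProd S v' = wordProd S v → v.length ≤ v'.length)
    {s : S} (hμ : wordProd S v = wordProd S u * s) :
    v.length < u.length + Fintype.card Q * B.card := by
  subst hM
  refine length_lt_add_card_mul_card_of_shortest hv hmin (wordProd S u) u.length B fun i hi => ?_
  obtain ⟨c, hc, hcμ⟩ := hft.exists_short_word hS hu hv hμ i
  rw [List.take_of_length_le hi] at hcμ
  exact hcμ ▸ hB c hc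

lemma FellowTravelerProperty.exists_length_le {L : Language S} {k : ℕ}
    (hft : FellowTravelerProperty S L k) (hSfin : S.Finite)
    {Q : Type*} [Fintype Q] {M : DFA S Q} (hM : M.accepts = L)
    (hsurj : ∀ g : G, ∃ w ∈ L, wordProd S w = g) :
    ∃ N : ℕ, ∀ g : G,
      ∃ u ∈ L, wordProd S u = g ∧ u.length ≤ N * (wordDist S g 1 + 1) := by
  have hS (g : G) : ∃ w : List S, wordProd S w = g := (hsurj g).imp fun _ h => h.2
  have := hSfin.to_subtype
  set B := ((List.finite_length_le S k).image (wordProd S)).toFinset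
  set D := Fintype.card Q * B.card
  choose rep hrepL hrepμ hrepmin using exists_shortest hsurj
  have hstep (g : G) (s : S) : (rep (g * s)).length ≤ (rep g).length + D :=
    (hft.length_lt_of_shortest hS hM B (fun c hc => by simpa [B] using ⟨c, hc, rfl⟩)
      (hrepL g) (hrepL (g * s)) (fun v hv hvμ => hrepmin _ v hv (hvμ.trans (hrepμ _)))
      (by rw [hrepμ, hrepμ])).le
  have hgrowth (c : List S) : (rep (wordProd S c)).length ≤ (rep 1).length + D * c.length := by
    induction c using List.reverseRecOn with
    | nil => simp
    | append_singleton c s ih =>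
      simp only [wordProd_append, wordProd_singleton, List.length_append, List.length_singleton]
      linarith [hstep (wordProd S c) s]
  refine ⟨(rep 1).length + D, fun g => ⟨rep g, hrepL g, hrepμ g, ?_⟩⟩
  obtain ⟨c, hc, hcμ⟩ := exists_length_eq_wordDist hS g 1
  rw [inv_one, one_mul] at hcμ
  have := hgrowth c
  rw [hcμ, hc] at this
  nlinarith

lemma FellowTravelerProperty.wordToFree_mem_pow {L : Language S} {k : ℕ}
    (hft : FellowTravelerProperty S L k) (hk : 0 < k)
    (hS : ∀ g : G, ∃ w : List S, wordProd S w = g)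
    (rep : G → List S) (hrepL : ∀ g, rep g ∈ L) (hrepμ : ∀ g, wordProd S (rep g) = g)
    {w : List S} (hw : wordProd S w = 1) :
    wordToFree S w ∈ Group.conjugatesOfSet (relators S (2 * k + 2)) ^
      ∑ j ∈ Finset.range w.length,
        ((rep (wordProd S (w.take j))).length + (rep (wordProd S (w.take (j + 1)))).length +
          1) := by
  set X := fun j => wordToFree S (rep (wordProd S (w.take j)))
  have hprefix : ∀ j ≤ w.length, X 0 * wordToFree S (w.take j) * (X j)⁻¹ ∈
      Group.conjugatesOfSet (relators S (2 * k + 2)) ^ ∑ i ∈ Finset.range j,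
        ((rep (wordProd S (w.take i))).length + (rep (wordProd S (w.take (i + 1)))).length +
          1) := by
    intro j hj
    induction j with
    | zero => simp
    | succ j ih =>
      have hjw : j < w.length := hj
      have hμ : wordProd S (rep (wordProd S (w.take (j + 1)))) =
          wordProd S (rep (wordProd S (w.take j))) * w[j] := by
        rw [hrepμ, hrepμ, wordProd_take_add_one w hjw]
      have hladder := wordToFree_mul_of_mul_inv_mem_pow hk
        (hft.exists_short_word hS (hrepL _) (hrepL _) hμ) hμ
      have hsplit : X 0 * wordToFree S (w.take (j + 1)) * (X (j + 1))⁻¹ =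
          (X 0 * wordToFree S (w.take j) * (X j)⁻¹) *
            (X j * FreeGroup.of w[j] * (X (j + 1))⁻¹) := by
        rw [wordToFree_take_add_one w hjw]
        group
      rw [hsplit, Finset.sum_range_succ, pow_add]
      exact Set.mul_mem_mul (ih (by omega)) hladder
  have hX : X w.length = X 0 := by simp only [X, List.take_length, hw, List.take_zero, wordProd_nil]
  have := conj_mem_pow_conjugatesOfSet (hprefix w.length le_rfl) (X 0)⁻¹
  rw [List.take_length, hX] at this
  convert this using 1
  group

lemma normalClosure_eq_ker {R : Set (FreeGroup S)} (hR : ∀ r ∈ R, muEval S r = 1)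
    (hS : ∀ g : G, ∃ w : List S, wordProd S w = g)
    (hnull : ∀ w : List S, wordProd S w = 1 → wordToFree S w ∈ Subgroup.normalClosure R) :
    Subgroup.normalClosure R = (muEval S).ker := by
  refine le_antisymm (Subgroup.normalClosure_le_normal hR) fun x hx => ?_
  have hpos (x : FreeGroup S) : ∃ w : List S, wordProd S w = muEval S x ∧
      x * (wordToFree S w)⁻¹ ∈ Subgroup.normalClosure R := by
    induction x using FreeGroup.induction_on with
    | C1 => exact ⟨[], by simp, by simp⟩
    | of s => exact ⟨[s], by simp, by simp⟩
    | inv_of s _ =>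
      obtain ⟨w, hw⟩ := hS (s : G)⁻¹
      refine ⟨w, by simp [hw], ?_⟩
      rw [← mul_inv_rev, ← wordToFree_singleton, ← wordToFree_append]
      exact inv_mem (hnull _ (by simp [hw]))
    | mul x y hx hy =>
      obtain ⟨u, hu, hxu⟩ := hx
      obtain ⟨v, hv, hyv⟩ := hy
      refine ⟨u ++ v, by simp [hu, hv], ?_⟩
      have h := mul_mem (Subgroup.normalClosure_normal.conj_mem _ hyv x) hxu
      convert h using 1
      rw [wordToFree_append]
      group
  obtain ⟨w, hw, hxw⟩ := hpos x
  rw [hx] at hw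
  simpa using mul_mem hxw (hnull w hw)

lemma sum_length_le_of_length_le {N : ℕ} (rep : G → List S)
    (hrep : ∀ g, (rep g).length ≤ N * (wordDist S g 1 + 1)) (w : List S) :
    ∑ j ∈ Finset.range w.length,
        ((rep (wordProd S (w.take j))).length + (rep (wordProd S (w.take (j + 1)))).length + 1) ≤
      (2 * N + 1) *
        ∑ j ∈ Finset.range w.length, (wordDist S (wordProd S (w.take (j + 1))) 1 + 1) := by
  set f := fun j => wordDist S (wordProd S (w.take j)) 1 + 1
  have hf0 (m : ℕ) : f 0 ≤ f m := by simp [f, wordDist_self]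
  calc _ ≤ ∑ j ∈ Finset.range w.length, (N * f j + (N + 1) * f (j + 1)) :=
        Finset.sum_le_sum fun j _ => by
          simp only [f]
          linarith [hrep (wordProd S (w.take j)), hrep (wordProd S (w.take (j + 1)))]
    _ = N * ∑ j ∈ Finset.range w.length, f j +
          (N + 1) * ∑ j ∈ Finset.range w.length, f (j + 1) := by
      rw [Finset.sum_add_distrib, Finset.mul_sum, Finset.mul_sum]
    _ ≤ N * ∑ j ∈ Finset.range w.length, f (j + 1) +
          (N + 1) * ∑ j ∈ Finset.range w.length, f (j + 1) := by
      gcongr N * ?_ + _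
      exact Finset.sum_range_le_sum_range_succ f hf0 _
    _ = _ := by ring

end FellowTraveler

theorem automatic_imp_quadratic_radial_isoperimetric_general
    {G : Type*} [Group G] (S : Set G)
    (hSfin : S.Finite)
    (L : Language S)
    -- `L` is a regular language over the alphabet `S`
    (hreg : ∃ (Q : Type) (_ : Fintype Q) (M : DFA S Q), M.accepts = L)
    -- the evaluation map `μ : L → G` is surjective
    (hsurj : ∀ g : G, ∃ w ∈ L, wordProd S w = g)
    -- the `k`-fellow traveler property
    (hft : ∃ k : ℕ, 0 < k ∧ ∀ u ∈ L, ∀ v ∈ L,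
      wordDist S (wordProd S u) (wordProd S v) ≤ 1 →
      ∀ i : ℕ, wordDist S (wordProd S (u.take i)) (wordProd S (v.take i)) ≤ k) :
    ∃ R : Set (FreeGroup S), R.Finite ∧ (∀ r ∈ R, muEval S r = 1) ∧
      Subgroup.normalClosure R = (muEval S).ker ∧
      ∃ C : ℝ, 0 < C ∧ ∀ w : List S, wordProd S w = 1 →
        (area S R w : ℝ) ≤ C * ∑ i ∈ Finset.range w.length,
          ((wordDist S (wordProd S (w.take (i + 1))) 1 : ℝ) + 1) := by
  obtain ⟨k, hk, hft⟩ := hft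
  obtain ⟨Q, _, M, hM⟩ := hreg
  have hS (g : G) : ∃ w : List S, wordProd S w = g := (hsurj g).imp fun _ h => h.2
  obtain ⟨N, hN⟩ := FellowTravelerProperty.exists_length_le hft hSfin hM hsurj
  choose rep hrepL hrepμ hrepN using hN
  have hnull {w : List S} (hw : wordProd S w = 1) :=
    FellowTravelerProperty.wordToFree_mem_pow hft hk hS rep hrepL hrepμ hw
  refine ⟨relators S (2 * k + 2), relators_finite hSfin _, fun r hr => hr.1,
    normalClosure_eq_ker (fun r hr => hr.1) hS fun w hw =>
      Subgroup.pow_subset Subgroup.conjugatesOfSet_subset_normalClosure (hnull hw),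
    2 * N + 1, by positivity, fun w hw => ?_⟩
  exact_mod_cast (area_le_of_mem_pow (hnull hw)).trans (sum_length_le_of_length_le rep hrepN w)

/-- An automatic group satisfies the quadratic radial isoperimetric
inequality. -/
theorem automatic_imp_quadratic_radial_isoperimetric
    {G : Type*} [Group G] (S : Set G)
    (hSfin : S.Finite) (hSsymm : S⁻¹ = S) (hSgen : Subgroup.closure S = ⊤)
    (L : Language S)
    -- `L` is a regular language over the alphabet `S`
    (hreg : ∃ (Q : Type) (_ : Fintype Q) (M : DFA S Q), M.accepts = L)
    -- the evaluation map `μ : L → G` is surjective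
    (hsurj : ∀ g : G, ∃ w ∈ L, wordProd S w = g)
    -- the `k`-fellow traveler property
    (hft : ∃ k : ℕ, 0 < k ∧ ∀ u ∈ L, ∀ v ∈ L,
      wordDist S (wordProd S u) (wordProd S v) ≤ 1 →
      ∀ i : ℕ, wordDist S (wordProd S (u.take i)) (wordProd S (v.take i)) ≤ k) :
    ∃ R : Set (FreeGroup S), R.Finite ∧ (∀ r ∈ R, muEval S r = 1) ∧
      Subgroup.normalClosure R = (muEval S).ker ∧
      ∃ C : ℝ, 0 < C ∧ ∀ w : List S, wordProd S w = 1 →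
        (area S R w : ℝ) ≤ C * ∑ i ∈ Finset.range w.length,
          ((wordDist S (wordProd S (w.take (i + 1))) 1 : ℝ) + 1) :=
  automatic_imp_quadratic_radial_isoperimetric_general S hSfin L hreg hsurj hft
end

section
/- Let X be a geodesic metric space and let a group G act on X by isometries. Let p ∈ X and D > 0 be such that every x ∈ X satisfies d(x, g·p) ≤ 2D for some g ∈ G. Set Ω = B(p, 4D) (the open ball of radius 4D centered at p) and S = { g ∈ G : g·Ω ∩ Ω ≠ ∅ }. Then S is symmetric (S = S⁻¹) and S generates G. If moreover X is proper and the action is properly discontinuous, then S is finite. -/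
open scoped Pointwise

/-- `γ : ℝ → X` is a geodesic from `x` to `y`: it is defined (relevantly) on
`[0, d(x,y)]`, starts at `x`, ends at `y`, and is an isometric embedding there. -/
def IsGeodesic {X : Type*} [MetricSpace X] (γ : ℝ → X) (x y : X) : Prop :=
  γ 0 = x ∧ γ (dist x y) = y ∧
    ∀ s ∈ Set.Icc (0 : ℝ) (dist x y), ∀ t ∈ Set.Icc (0 : ℝ) (dist x y),
      dist (γ s) (γ t) = |s - t|

/-- `X` is a geodesic metric space: every pair of points is joined by a geodesic. -/
def IsGeodesicSpace (X : Type*) [MetricSpace X] : Prop :=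
  ∀ x y : X, ∃ γ : ℝ → X, IsGeodesic γ x y

/-- `X` is a CAT(0) space: the comparison inequality holds along every geodesic. -/
def IsCAT0 (X : Type*) [MetricSpace X] : Prop :=
  ∀ x y z : X, ∀ γ : ℝ → X, IsGeodesic γ y z → ∀ t ∈ Set.Icc (0 : ℝ) 1,
    dist x (γ (t * dist y z)) ^ 2 ≤
      (1 - t) * dist x y ^ 2 + t * dist x z ^ 2 - t * (1 - t) * dist y z ^ 2

/-- For a cocompact isometric action of `G` on a geodesic space `X`,
the set `S = {g : g·B(p,4D) ∩ B(p,4D) ≠ ∅}` is a symmetric generating set of `G`;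
if moreover `X` is proper and the action is properly discontinuous, `S` is finite. -/
theorem ball_intersection_generating_set
    {G X : Type*} [Group G] [MetricSpace X] [MulAction G X]
    (hgeo : IsGeodesicSpace X)
    -- `G` acts by isometries
    (hiso : ∀ (g : G) (x y : X), dist (g • x) (g • y) = dist x y)
    (p : X) (D : ℝ) (hD : 0 < D)
    -- the action is cocompact
    (hcocpt : ∀ x : X, ∃ g : G, dist x (g • p) ≤ 2 * D)
    (S : Set G)
    (hS : S = {g : G | ((g • ·) '' Metric.ball p (4 * D) ∩ Metric.ball p (4 * D)).Nonempty}) :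
    S⁻¹ = S ∧ Subgroup.closure S = ⊤ ∧
      (ProperSpace X →
        (∀ K K' : Set X, IsCompact K → IsCompact K' →
          {g : G | ((g • ·) '' K ∩ K').Nonempty}.Finite) →
        S.Finite) := by
  have key : ∀ g : G, dist p (g • p) < 8 * D →
      ((g • ·) '' Metric.ball p (4 * D) ∩ Metric.ball p (4 * D)).Nonempty := by
    intro g hd
    obtain ⟨γ, h0, h1, hγ⟩ := hgeo p (g • p)
    set L := dist p (g • p) with hL
    have hL0 : 0 ≤ L := dist_nonneg
    have hmem : L / 2 ∈ Set.Icc (0 : ℝ) L := ⟨by linarith, by linarith⟩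
    have hmem0 : (0 : ℝ) ∈ Set.Icc (0 : ℝ) L := ⟨le_refl _, hL0⟩
    have hmemL : L ∈ Set.Icc (0 : ℝ) L := ⟨hL0, le_refl _⟩
    have d1 : dist (γ (L / 2)) p = L / 2 := by
      have := hγ (L / 2) hmem 0 hmem0
      rw [h0] at this
      rw [this, sub_zero, abs_of_nonneg (by linarith)]
    have d2 : dist (γ (L / 2)) (g • p) = L / 2 := by
      have := hγ (L / 2) hmem L hmemL
      rw [h1] at this
      rw [this, abs_of_nonpos (by linarith)]
      ring
    refine ⟨γ (L / 2), ⟨g⁻¹ • γ (L / 2), ?_, by simp⟩, ?_⟩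
    · have : dist (g⁻¹ • γ (L / 2)) p = dist (γ (L / 2)) (g • p) := by
        rw [← hiso g (g⁻¹ • γ (L / 2)) p, smul_inv_smul]
      rw [Metric.mem_ball, this, d2]
      linarith
    · rw [Metric.mem_ball, d1]; linarith
  have hdist : ∀ (h g : G), dist p ((h⁻¹ * g) • p) = dist (h • p) (g • p) := by
    intro h g
    rw [← hiso h p ((h⁻¹ * g) • p), smul_smul, mul_inv_cancel_left]
  constructor
  · -- symmetry
    have hsub : ∀ g : G, g ∈ S → g⁻¹ ∈ S := by
      intro g hg
      rw [hS] at hg ⊢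
      obtain ⟨m, ⟨x, hx, hgx⟩, hm⟩ := hg
      exact ⟨x, ⟨m, hm, by simp [← hgx]⟩, hx⟩
    ext g
    simp only [Set.mem_inv]
    constructor
    · intro hg
      have := hsub g⁻¹ hg
      simpa using this
    · exact hsub g
  constructor
  · -- generation
    have claim : ∀ n : ℕ, ∀ g : G, dist p (g • p) < 8 * D + 2 * D * n →
        g ∈ Subgroup.closure S := by
      intro n
      induction n with
      | zero =>
        intro g hg
        apply Subgroup.subset_closure
        rw [hS]
        exact key g (by simpa using hg)
      | succ n ih =>
        intro g hg
        by_cases hcase : dist p (g • p) < 8 * D + 2 * D * n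
        · exact ih g hcase
        push_neg at hcase
        set d := dist p (g • p) with hd
        have hd8 : 8 * D ≤ d := le_trans (by nlinarith [(Nat.cast_nonneg n : (0:ℝ) ≤ n)]) hcase
        obtain ⟨γ, h0, h1, hγ⟩ := hgeo p (g • p)
        have hmemq : d - 4 * D ∈ Set.Icc (0 : ℝ) d := ⟨by linarith, by linarith⟩
        have hmem0 : (0 : ℝ) ∈ Set.Icc (0 : ℝ) d := ⟨le_refl _, by linarith⟩
        have hmemL : d ∈ Set.Icc (0 : ℝ) d := ⟨by linarith, le_refl _⟩
        have dq1 : dist p (γ (d - 4 * D)) = d - 4 * D := by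
          have := hγ 0 hmem0 (d - 4 * D) hmemq
          rw [h0] at this
          rw [this, abs_of_nonpos (by linarith)]
          ring
        have dq2 : dist (γ (d - 4 * D)) (g • p) = 4 * D := by
          have := hγ (d - 4 * D) hmemq d hmemL
          rw [h1] at this
          rw [this, abs_of_nonpos (by linarith)]
          ring
        obtain ⟨h, hh⟩ := hcocpt (γ (d - 4 * D))
        have hhp : dist p (h • p) < 8 * D + 2 * D * n := by
          have := dist_triangle p (γ (d - 4 * D)) (h • p)
          rw [dq1] at this
          have hle : dist p (h • p) ≤ d - 2 * D := by linarith
          have : d < 8 * D + 2 * D * (n + 1) := by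
            push_cast at hg ⊢; linarith
          linarith
        have hmemh : h ∈ Subgroup.closure S := ih h hhp
        have hS2 : h⁻¹ * g ∈ S := by
          rw [hS]
          apply key
          rw [hdist]
          calc dist (h • p) (g • p) ≤ dist (h • p) (γ (d - 4 * D)) + dist (γ (d - 4 * D)) (g • p) :=
                dist_triangle _ _ _
            _ ≤ 2 * D + 4 * D := by rw [dq2, dist_comm]; linarith
            _ < 8 * D := by linarith
        have : g = h * (h⁻¹ * g) := by group
        rw [this]
        exact mul_mem hmemh (Subgroup.subset_closure hS2)
    rw [Subgroup.eq_top_iff']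
    intro g
    obtain ⟨n, hn⟩ := exists_nat_gt (dist p (g • p) / (2 * D))
    apply claim n
    have h2D : 0 < 2 * D := by linarith
    have := (div_lt_iff₀ h2D).mp hn
    nlinarith [dist_nonneg (x := p) (y := g • p)]
  · -- finiteness
    intro hP hpd
    apply Set.Finite.subset (hpd (Metric.closedBall p (4 * D)) (Metric.closedBall p (4 * D))
      (isCompact_closedBall p _) (isCompact_closedBall p _))
    rw [hS]
    intro g hg
    obtain ⟨m, ⟨x, hx, hgx⟩, hm⟩ := hg
    exact ⟨m, ⟨x, Metric.ball_subset_closedBall hx, hgx⟩, Metric.ball_subset_closedBall hm⟩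
end

section
/- Let X be a geodesic metric space, let a group G act on X by isometries, and let p ∈ X and D > 0 be such that every x ∈ X satisfies d(x, g·p) ≤ 2D for some g ∈ G. Let S = { g ∈ G : g·B(p,4D) ∩ B(p,4D) ≠ ∅ } (a symmetric generating set of G, where B(p,4D) is the open ball) and let d_S be the associated word metric on G. Then for all g₁, g₂ ∈ G: d(g₁·p, g₂·p) / (12D) ≤ d_S(g₁, g₂) ≤ ⌊ d(g₁·p, g₂·p) / D ⌋ + 1. -/
open scoped Pointwise

private lemma wordProd_telescope' {G : Type*} [Group G] (S : Set G) (h : ℕ → G)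
    (hmem : ∀ i, (h i)⁻¹ * h (i + 1) ∈ S) (n : ℕ) :
    wordProd S ((List.range n).map (fun i => ⟨(h i)⁻¹ * h (i + 1), hmem i⟩)) =
      (h 0)⁻¹ * h n := by
  induction n with
  | zero => simp [wordProd]
  | succ n ih =>
      have happ : ∀ (w : List S) (z : S), wordProd S (w ++ [z]) = wordProd S w * (z : G) := by
        intro w z; simp [wordProd]
      rw [List.range_succ, List.map_append, List.map_singleton, happ, ih]
      simp [mul_assoc]

private lemma memS_iff' {G X : Type*} [Group G] [MetricSpace X] [MulAction G X]
    (hgeo : IsGeodesicSpace X)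
    (hiso : ∀ (g : G) (x y : X), dist (g • x) (g • y) = dist x y)
    (p : X) (D : ℝ) (hD : 0 < D) (S : Set G)
    (hS : S = {g : G | ((g • ·) '' Metric.ball p (4 * D) ∩ Metric.ball p (4 * D)).Nonempty}) :
    ∀ g : G, g ∈ S ↔ dist p (g • p) < 8 * D := by
  intro g
  subst hS
  constructor
  · rintro ⟨y, ⟨x, hx, rfl⟩, hy⟩
    simp only [Metric.mem_ball] at hx hy
    have h1 : dist (g • x) (g • p) = dist x p := hiso g x p
    calc dist p (g • p) ≤ dist p (g • x) + dist (g • x) (g • p) := dist_triangle _ _ _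
      _ = dist (g • x) p + dist x p := by rw [dist_comm p (g • x), h1]
      _ < 4 * D + 4 * D := by linarith
      _ = 8 * D := by ring
  · intro hlt
    obtain ⟨γ, hγ0, hγd, hγ⟩ := hgeo p (g • p)
    set d := dist p (g • p) with hd
    have hd0 : 0 ≤ d := dist_nonneg
    have hmem : d / 2 ∈ Set.Icc (0 : ℝ) d := ⟨by linarith, by linarith⟩
    have hmem0 : (0 : ℝ) ∈ Set.Icc (0 : ℝ) d := ⟨le_refl _, hd0⟩
    have hmemd : d ∈ Set.Icc (0 : ℝ) d := ⟨hd0, le_refl _⟩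
    have h1 : dist (γ 0) (γ (d / 2)) = d / 2 := by
      rw [hγ 0 hmem0 (d / 2) hmem]; rw [abs_of_nonpos (by linarith)]; ring
    have h2 : dist (γ (d / 2)) (γ d) = d / 2 := by
      rw [hγ (d / 2) hmem d hmemd]; rw [abs_of_nonpos (by linarith)]; ring
    refine ⟨γ (d / 2), ⟨g⁻¹ • γ (d / 2), ?_, by simp⟩, ?_⟩
    · simp only [Metric.mem_ball]
      have : dist (g⁻¹ • γ (d / 2)) (g⁻¹ • (g • p)) = dist (γ (d / 2)) (g • p) :=
        hiso g⁻¹ _ _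
      rw [inv_smul_smul] at this
      rw [this, ← hγd, h2]
      linarith
    · simp only [Metric.mem_ball]
      rw [dist_comm, ← hγ0, h1]
      linarith

private lemma exists_word' {G X : Type*} [Group G] [MetricSpace X] [MulAction G X]
    (hgeo : IsGeodesicSpace X)
    (hiso : ∀ (g : G) (x y : X), dist (g • x) (g • y) = dist x y)
    (p : X) (D : ℝ) (hD : 0 < D)
    (hcocpt : ∀ x : X, ∃ g : G, dist x (g • p) ≤ 2 * D)
    (S : Set G)
    (hmem : ∀ g : G, dist p (g • p) < 8 * D → g ∈ S) (a b : G) :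
    ∃ w : List S, w.length = (⌊dist (a • p) (b • p) / D⌋.toNat + 1) ∧
      wordProd S w = b⁻¹ * a := by
  obtain ⟨γ, hγ0, hγd, hγ⟩ := hgeo (b • p) (a • p)
  set d := dist (b • p) (a • p) with hdd
  have hdcomm : dist (a • p) (b • p) = d := dist_comm _ _
  have hd0 : 0 ≤ d := dist_nonneg
  set n : ℕ := ⌊d / D⌋.toNat + 1 with hn
  have hnpos : 0 < n := Nat.succ_pos _
  have hnR : (0 : ℝ) < n := by exact_mod_cast hnpos
  have hfl : (⌊d / D⌋ : ℝ) ≤ (⌊d / D⌋.toNat : ℝ) := by exact_mod_cast Int.self_le_toNat _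
  have hdn : d < n * D := by
    have h1 : d / D < (⌊d / D⌋ : ℝ) + 1 := Int.lt_floor_add_one _
    have h2 : d / D < (n : ℝ) := by
      rw [hn]; push_cast; linarith
    calc d = (d / D) * D := by field_simp
      _ < (n : ℝ) * D := by exact mul_lt_mul_of_pos_right h2 hD
  have hdnD : d / n < D := by
    rw [div_lt_iff₀ hnR]; linarith [hdn, mul_comm (n : ℝ) D]
  set x : ℕ → X := fun i => γ (i * (d / n)) with hx
  have hxmem : ∀ i : ℕ, i ≤ n → (i : ℝ) * (d / n) ∈ Set.Icc (0 : ℝ) d := by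
    intro i hi
    constructor
    · positivity
    · have : (i : ℝ) * (d / n) ≤ (n : ℝ) * (d / n) := by
        apply mul_le_mul_of_nonneg_right _ (by positivity)
        exact_mod_cast hi
      rw [mul_div_cancel₀ d (ne_of_gt hnR)] at this
      exact this
  have hxn : x n = a • p := by
    simp only [hx]
    rw [mul_div_cancel₀ d (ne_of_gt hnR), hγd]
  have hx0 : x 0 = b • p := by
    simp only [hx, Nat.cast_zero, zero_mul, hγ0]
  have hxdist : ∀ i : ℕ, i + 1 ≤ n → dist (x i) (x (i + 1)) = d / n := by
    intro i hi
    simp only [hx]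
    rw [hγ _ (hxmem i (by omega)) _ (hxmem (i + 1) hi)]
    have hc : (0 : ℝ) ≤ d / n := div_nonneg hd0 hnR.le
    have hcast : ((i + 1 : ℕ) : ℝ) = (i : ℝ) + 1 := by push_cast; ring
    rw [hcast, show (i : ℝ) * (d / n) - ((i : ℝ) + 1) * (d / n) = -(d / n) by ring,
      abs_neg, abs_of_nonneg hc]
  set h : ℕ → G := fun i => if i = 0 then b else if n ≤ i then a
      else Classical.choose (hcocpt (x i)) with hh
  have hcl : ∀ i : ℕ, i ≤ n → dist (x i) (h i • p) ≤ 2 * D := by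
    intro i hi
    by_cases h0 : i = 0
    · subst h0
      have e : h 0 = b := by simp [hh]
      rw [e, hx0, dist_self]; positivity
    · by_cases h1 : n ≤ i
      · have : i = n := le_antisymm hi h1
        subst this
        simp only [hh]; rw [if_neg h0, if_pos h1]
        rw [hxn, dist_self]; positivity
      · simp only [hh]; rw [if_neg h0, if_neg h1]
        exact Classical.choose_spec (hcocpt (x i))
  have hstep : ∀ i : ℕ, dist p (((h i)⁻¹ * h (i + 1)) • p) < 8 * D := by
    intro i
    by_cases hi : i + 1 ≤ n
    · have key : dist p (((h i)⁻¹ * h (i + 1)) • p) = dist (h i • p) (h (i + 1) • p) := by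
        have := hiso (h i) p (((h i)⁻¹ * h (i + 1)) • p)
        rw [← this]
        congr 1
        rw [← mul_smul, mul_inv_cancel_left]
      rw [key]
      have t1 : dist (h i • p) (h (i + 1) • p) ≤
          dist (h i • p) (x i) + dist (x i) (x (i + 1)) + dist (x (i + 1)) (h (i + 1) • p) :=
        dist_triangle4 _ _ _ _
      have t2 : dist (h i • p) (x i) ≤ 2 * D := by rw [dist_comm]; exact hcl i (by omega)
      have t3 : dist (x (i + 1)) (h (i + 1) • p) ≤ 2 * D := hcl (i + 1) hi
      have t4 : dist (x i) (x (i + 1)) < D := by rw [hxdist i hi]; exact hdnD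
      linarith
    · have hi' : n ≤ i := by omega
      have e1 : h i = a := by
        simp only [hh]; rw [if_neg (by omega : ¬ i = 0), if_pos hi']
      have e2 : h (i + 1) = a := by
        simp only [hh]; rw [if_neg (by omega : ¬ i + 1 = 0), if_pos (by omega : n ≤ i + 1)]
      rw [e1, e2, inv_mul_cancel, one_smul, dist_self]
      positivity
  refine ⟨(List.range n).map (fun i => (⟨(h i)⁻¹ * h (i + 1), hmem _ (hstep i)⟩ : S)), ?_, ?_⟩
  · rw [List.length_map, List.length_range, hdcomm]
  · have e0 : h 0 = b := by simp [hh]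
    have en : h n = a := by
      simp only [hh]; rw [if_neg (by omega : ¬ n = 0), if_pos (le_refl n)]
    have := wordProd_telescope' S h (fun i => hmem _ (hstep i)) n
    rw [e0, en] at this
    exact this

private lemma word_dist_bound' {G X : Type*} [Group G] [MetricSpace X] [MulAction G X]
    (hiso : ∀ (g : G) (x y : X), dist (g • x) (g • y) = dist x y)
    (p : X) (D : ℝ) (hD : 0 < D) (S : Set G)
    (hmem : ∀ g : G, g ∈ S → dist p (g • p) < 8 * D) :
    ∀ w : List S, dist p (wordProd S w • p) ≤ 8 * D * w.length := by
  intro w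
  induction w with
  | nil => simp [wordProd]
  | cons s t ih =>
      have e : wordProd S (s :: t) = (s : G) * wordProd S t := by
        simp [wordProd]
      rw [e]
      have key : dist ((s : G) • p) (((s : G) * wordProd S t) • p) = dist p (wordProd S t • p) := by
        rw [mul_smul]; exact hiso (s : G) p (wordProd S t • p)
      calc dist p (((s : G) * wordProd S t) • p)
          ≤ dist p ((s : G) • p) + dist ((s : G) • p) (((s : G) * wordProd S t) • p) :=
            dist_triangle _ _ _
        _ ≤ 8 * D + 8 * D * t.length := by
            have := hmem (s : G) s.2
            linarith [ih, key.le, key.ge]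
        _ = 8 * D * (t.length + 1) := by ring
        _ = 8 * D * (s :: t).length := by
            simp only [List.length_cons]; push_cast; ring

/-- The word metric of `S = {g : g·B(p,4D) ∩ B(p,4D) ≠ ∅}` on `G` is
comparable to the orbit metric:
`d(g₁p, g₂p)/(12D) ≤ d_S(g₁,g₂) ≤ ⌊d(g₁p, g₂p)/D⌋ + 1`. -/
theorem word_metric_orbit_metric_comparison
    {G X : Type*} [Group G] [MetricSpace X] [MulAction G X]
    (hgeo : IsGeodesicSpace X)
    -- `G` acts by isometries
    (hiso : ∀ (g : G) (x y : X), dist (g • x) (g • y) = dist x y)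
    (p : X) (D : ℝ) (hD : 0 < D)
    -- the action is cocompact
    (hcocpt : ∀ x : X, ∃ g : G, dist x (g • p) ≤ 2 * D)
    (S : Set G)
    (hS : S = {g : G | ((g • ·) '' Metric.ball p (4 * D) ∩ Metric.ball p (4 * D)).Nonempty}) :
    ∀ g₁ g₂ : G,
      dist (g₁ • p) (g₂ • p) / (12 * D) ≤ (wordDist S g₁ g₂ : ℝ) ∧
      (wordDist S g₁ g₂ : ℝ) ≤ (⌊dist (g₁ • p) (g₂ • p) / D⌋ : ℝ) + 1 := by

  intro g₁ g₂
  have hmemS := memS_iff' hgeo hiso p D hD S hS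
  obtain ⟨w, hwl, hwp⟩ := exists_word' hgeo hiso p D hD hcocpt S
    (fun g hg => (hmemS g).2 hg) g₁ g₂
  set d := dist (g₁ • p) (g₂ • p) with hdd
  have hd0 : 0 ≤ d := dist_nonneg
  have hmemset : (⌊d / D⌋.toNat + 1) ∈
      {n | ∃ w : List S, w.length = n ∧ wordProd S w = g₂⁻¹ * g₁} := ⟨w, hwl, hwp⟩
  have hupper : wordDist S g₁ g₂ ≤ ⌊d / D⌋.toNat + 1 := Nat.sInf_le hmemset
  have hfl0 : (0 : ℤ) ≤ ⌊d / D⌋ := Int.floor_nonneg.2 (div_nonneg hd0 hD.le)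
  constructor
  · -- lower bound
    have hk : wordDist S g₁ g₂ ∈
        {n | ∃ w : List S, w.length = n ∧ wordProd S w = g₂⁻¹ * g₁} :=
      Nat.sInf_mem ⟨_, hmemset⟩
    obtain ⟨v, hvl, hvp⟩ := hk
    have hbound := word_dist_bound' hiso p D hD S (fun g hg => (hmemS g).1 hg) v
    rw [hvp, hvl] at hbound
    have heq : dist p ((g₂⁻¹ * g₁) • p) = d := by
      have := hiso g₂ p ((g₂⁻¹ * g₁) • p)
      rw [← this, ← mul_smul, mul_inv_cancel_left, hdd, dist_comm]
    rw [heq] at hbound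
    rw [div_le_iff₀ (by linarith : (0 : ℝ) < 12 * D)]
    have hk0 : (0 : ℝ) ≤ (wordDist S g₁ g₂ : ℝ) := Nat.cast_nonneg _
    nlinarith
  · -- upper bound
    have h1 : (wordDist S g₁ g₂ : ℝ) ≤ ((⌊d / D⌋.toNat + 1 : ℕ) : ℝ) := by
      exact_mod_cast hupper
    have h2 : ((⌊d / D⌋.toNat : ℕ) : ℝ) = ((⌊d / D⌋ : ℤ) : ℝ) := by
      exact_mod_cast Int.toNat_of_nonneg hfl0
    push_cast at h1
    rw [h2] at h1
    exact h1
end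

section
/- Let A, B, C be points in a real inner product space (e.g. the Euclidean plane ℝ²), and let d denote the distance. (i) If d(A,B) ≤ d(A,C), E lies on the segment [A,B], and E′ lies on the segment [A,C] with d(A,E) = d(A,E′), then d(E,E′) ≤ d(B,C). (ii) If E′ lies on the segment [A,C] and d(A,B) ≤ d(A,E′), then d(B,E′) ≤ d(B,C). -/
open RealInnerProductSpace

private lemma seg_aux1 {V : Type*} [NormedAddCommGroup V] [InnerProductSpace ℝ V]
    (u v : V) {s t : ℝ} (hs0 : 0 ≤ s) (hs1 : s ≤ 1) (ht0 : 0 ≤ t) (ht1 : t ≤ 1)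
    (h : s * ‖u‖ = t * ‖v‖) : ‖s • u - t • v‖ ≤ ‖u - v‖ := by
  have hCS : ⟪u, v⟫ ≤ ‖u‖ * ‖v‖ := real_inner_le_norm u v
  have hst : s * t ≤ 1 := mul_le_one₀ hs1 ht0 ht1
  have h1 : (s * ‖u‖) * (t * ‖v‖) = (s * ‖u‖) * (s * ‖u‖) := by rw [h]
  have h2 : (s * ‖u‖) * (t * ‖v‖) = (t * ‖v‖) * (t * ‖v‖) := by rw [h]
  have key : ‖s • u - t • v‖ ^ 2 ≤ ‖u - v‖ ^ 2 := by
    rw [norm_sub_sq_real, norm_sub_sq_real, norm_smul, norm_smul,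
      real_inner_smul_left, real_inner_smul_right,
      Real.norm_of_nonneg hs0, Real.norm_of_nonneg ht0]
    nlinarith [sq_nonneg (‖u‖ - ‖v‖),
      mul_nonneg (sub_nonneg.2 hst) (sub_nonneg.2 hCS), h1, h2]
  have := Real.sqrt_le_sqrt key
  rwa [Real.sqrt_sq (norm_nonneg _), Real.sqrt_sq (norm_nonneg _)] at this

private lemma seg_aux2 {V : Type*} [NormedAddCommGroup V] [InnerProductSpace ℝ V]
    (u v : V) {t : ℝ} (ht0 : 0 ≤ t) (ht1 : t ≤ 1)
    (h : ‖u‖ ≤ t * ‖v‖) : ‖u - t • v‖ ≤ ‖u - v‖ := by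
  have hCS : ⟪u, v⟫ ≤ ‖u‖ * ‖v‖ := real_inner_le_norm u v
  have h3 : ⟪u, v⟫ ≤ t * ‖v‖ * ‖v‖ :=
    hCS.trans (mul_le_mul_of_nonneg_right h (norm_nonneg v))
  have key : ‖u - t • v‖ ^ 2 ≤ ‖u - v‖ ^ 2 := by
    rw [norm_sub_sq_real, norm_sub_sq_real, norm_smul,
      real_inner_smul_right, Real.norm_of_nonneg ht0]
    nlinarith [mul_nonneg (sub_nonneg.2 ht1) (sub_nonneg.2 h3),
      sq_nonneg ((1 - t) * ‖v‖)]
  have := Real.sqrt_le_sqrt key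
  rwa [Real.sqrt_sq (norm_nonneg _), Real.sqrt_sq (norm_nonneg _)] at this

/-- In a real inner product space: (i) if `d(A,B) ≤ d(A,C)`, `P` lies
on the segment `[A,B]`, `Q` lies on the segment `[A,C]` and `d(A,P) = d(A,Q)`, then
`d(P,Q) ≤ d(B,C)`; (ii) if `Q` lies on `[A,C]` and `d(A,B) ≤ d(A,Q)`, then
`d(B,Q) ≤ d(B,C)`. -/
theorem segment_comparison_inner_product_space
    {V : Type*} [NormedAddCommGroup V] [InnerProductSpace ℝ V] (A B C : V) :
    (∀ P Q : V, dist A B ≤ dist A C → P ∈ segment ℝ A B → Q ∈ segment ℝ A C →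
      dist A P = dist A Q → dist P Q ≤ dist B C) ∧
    (∀ Q : V, Q ∈ segment ℝ A C → dist A B ≤ dist A Q → dist B Q ≤ dist B C) := by
  have hBC : dist B C = ‖(B - A) - (C - A)‖ := by rw [dist_eq_norm]; congr 1; abel
  constructor
  · rintro P Q hle hP hQ hPQ
    rw [segment_eq_image'] at hP hQ
    obtain ⟨s, hs, rfl⟩ := hP
    obtain ⟨t, ht, rfl⟩ := hQ
    rw [dist_self_add_right, dist_self_add_right, norm_smul, norm_smul,
      Real.norm_of_nonneg hs.1, Real.norm_of_nonneg ht.1] at hPQ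
    rw [dist_add_left, dist_eq_norm, hBC]
    exact seg_aux1 _ _ hs.1 hs.2 ht.1 ht.2 hPQ
  · rintro Q hQ hle
    rw [segment_eq_image'] at hQ
    obtain ⟨t, ht, rfl⟩ := hQ
    rw [dist_self_add_right, norm_smul, Real.norm_of_nonneg ht.1, dist_eq_norm'] at hle
    have hd : dist B (A + t • (C - A)) = ‖(B - A) - t • (C - A)‖ := by
      rw [dist_eq_norm]; congr 1; abel
    rw [hd, hBC]
    exact seg_aux2 _ _ ht.1 ht.2 hle
end
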